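/- arXiv:2107.02377 — 7 statements merged into one kernel-verified Lean document; each statement's English description precedes it below -/
import Mathlib

section
/- Let H be a real inner product space, X ⊆ H, S > 0 and ε > 0, and let F be a function class with F ⊆ B(S). If x ∈ X is ε'-independent of a finite list S = {x_1,…,x_n} ⊆ X with respect to F for some ε' ≥ ε, then the increment of information gain satisfies Δγ((ε/(2S))²; x | S) > log(3/2). -/
open scoped RealInnerProductSpace BigOperators

/-- Gram matrix `(K_T)_{ij} = ⟪x_i, x_j⟫` of a tuple of points. -/
noncomputable def gram {H : Type*} [NormedAddCommGroup H] [InnerProductSpace ℝ H]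
    {T : ℕ} (x : Fin T → H) : Matrix (Fin T) (Fin T) ℝ :=
  Matrix.of fun i j => ⟪x i, x j⟫

/-- Information gain `γ(λ; x_1,…,x_T) = log det (I + λ⁻¹ K_T)`. -/
noncomputable def infoGain {H : Type*} [NormedAddCommGroup H] [InnerProductSpace ℝ H]
    (lam : ℝ) {T : ℕ} (x : Fin T → H) : ℝ :=
  Real.log (1 + lam⁻¹ • gram x).det

/-- The ball of radius `S` in the RKHS: `B(S) = {x ↦ ⟪θ, x⟫ : ‖θ‖ ≤ S}`. -/
def rkhsBall {H : Type*} [NormedAddCommGroup H] [InnerProductSpace ℝ H] (S : ℝ) :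
    Set (H → ℝ) :=
  {f | ∃ θ : H, ‖θ‖ ≤ S ∧ f = fun x => ⟪θ, x⟫}

/-- `x` is `ε`-dependent on `x_1,…,x_n` w.r.t. `F` if every `f, g ∈ F` with
`∑ᵢ (f xᵢ - g xᵢ)² ≤ ε²` also satisfy `f x - g x ≤ ε`. -/
def epsDependent {H : Type*} [NormedAddCommGroup H] [InnerProductSpace ℝ H]
    (F : Set (H → ℝ)) (ε : ℝ) (x : H) {n : ℕ} (xs : Fin n → H) : Prop :=
  ∀ f ∈ F, ∀ g ∈ F, (∑ i, (f (xs i) - g (xs i)) ^ 2 ≤ ε ^ 2) → f x - g x ≤ ε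

/-- Increment of information gain `Δγ(λ; x | x_1,…,x_n)`. -/
noncomputable def incrGain {H : Type*} [NormedAddCommGroup H] [InnerProductSpace ℝ H]
    (lam : ℝ) (x : H) {n : ℕ} (xs : Fin n → H) : ℝ :=
  infoGain lam (Fin.cons x xs) - infoGain lam xs


/-!
By the Schur complement, `Δγ(λ; x | xs) = log (1 + σ² / λ)`, where
`σ² = ⟪x, x⟫ - kᵀ (λ I + K)⁻¹ k` (with `kᵢ = ⟪x, xsᵢ⟫`) is the regularized posterior variance
at `x`. For `w = (λ I + K)⁻¹ k` and `v = ∑ wᵢ xsᵢ` one has `σ² = λ ‖w‖² + ‖x - v‖²`, and splitting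
`⟪θ, x⟫ = ⟪θ, x - v⟫ + ∑ wᵢ ⟪θ, xsᵢ⟫` Cauchy–Schwarz gives
`λ ⟪θ, x⟫² ≤ (λ ‖θ‖² + ∑ ⟪θ, xsᵢ⟫²) σ²`.
A witness `f_{θ₁}, f_{θ₂}` of `ε'`-independence yields `θ = θ₁ - θ₂` with `‖θ‖ ≤ 2S`,
`∑ ⟪θ, xsᵢ⟫² ≤ ε'²` and `⟪θ, x⟫ > ε'`; for `λ = (ε / 2S)²` the bracket is at most `2 ε'²`,
hence `σ² / λ > 1/2`.
-/

open scoped Matrix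

theorem mul_add_sq_le_of_mul_sq_le {a b c A B C D : ℝ} (hc : 0 ≤ c) (hA : 0 ≤ A) (hB : 0 ≤ B)
    (hC : 0 ≤ C) (hD : 0 ≤ D) (ha : c * a ^ 2 ≤ A * B) (hb : c * b ^ 2 ≤ C * D) :
    c * (a + b) ^ 2 ≤ (A + C) * (B + D) := by
  have hcross : (2 * (c * a * b)) ^ 2 ≤ (A * D + B * C) ^ 2 := by
    calc (2 * (c * a * b)) ^ 2 = 4 * ((c * a ^ 2) * (c * b ^ 2)) := by ring
      _ ≤ 4 * ((A * B) * (C * D)) := by gcongr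
      _ ≤ (A * D + B * C) ^ 2 := by nlinarith [sq_nonneg (A * D - B * C)]
  have := (abs_le_of_sq_le_sq hcross (by positivity)).trans' (le_abs_self _)
  nlinarith

namespace Matrix

theorem det_succ_eq_mul_schur {R : Type*} [CommRing R] {n : ℕ}
    (A : Matrix (Fin (n + 1)) (Fin (n + 1)) R)
    (hD : IsUnit (A.submatrix Fin.succ Fin.succ).det) :
    A.det = (A.submatrix Fin.succ Fin.succ).det *
      (A 0 0 - (fun j => A 0 j.succ) ⬝ᵥ (A.submatrix Fin.succ Fin.succ)⁻¹ *ᵥ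
        (fun i => A i.succ 0)) := by
  set D := A.submatrix Fin.succ Fin.succ
  let e : Fin n ⊕ Unit ≃ Fin (n + 1) :=
    ((finSuccEquiv n).trans (Equiv.optionEquivSumPUnit (Fin n))).symm
  have hblocks : A.submatrix e e =
      fromBlocks D (of fun i _ => A i.succ 0) (of fun _ j => A 0 j.succ) (of fun _ _ => A 0 0) := by
    ext (i | _) (j | _) <;> rfl
  let := D.invertibleOfIsUnitDet hD
  rw [← det_submatrix_equiv_self e, hblocks, det_fromBlocks₁₁, det_unique (n := Unit),
    invOf_eq_nonsing_inv]
  congr 1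
  simp only [sub_apply, of_apply, mul_apply, mulVec, dotProduct, Finset.mul_sum, Finset.sum_mul]
  rw [Finset.sum_comm]
  simp only [mul_assoc]

end Matrix

section InformationGain

variable {H : Type*} [NormedAddCommGroup H] [InnerProductSpace ℝ H] {lam : ℝ} {n : ℕ}

theorem posDef_smul_one_add_gram (hlam : 0 < lam) (x : Fin n → H) :
    (lam • (1 : Matrix (Fin n) (Fin n) ℝ) + gram x).PosDef :=
  (Matrix.PosDef.one.smul hlam).add_posSemidef (Matrix.posSemidef_gram ℝ x)

theorem gram_mulVec_apply (xs : Fin n → H) (w : Fin n → ℝ) (i : Fin n) :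
    (gram xs *ᵥ w) i = ⟪xs i, ∑ j, w j • xs j⟫ := by
  simp [gram, Matrix.mulVec, dotProduct, inner_sum, real_inner_smul_right, mul_comm]

noncomputable def posteriorVariance (lam : ℝ) (x : H) (xs : Fin n → H) : ℝ :=
  ⟪x, x⟫ - (fun i => ⟪x, xs i⟫) ⬝ᵥ (lam • (1 : Matrix (Fin n) (Fin n) ℝ) + gram xs)⁻¹ *ᵥ
    (fun i => ⟪x, xs i⟫)

theorem det_smul_one_add_gram_cons (hlam : 0 < lam) (x : H) (xs : Fin n → H) :
    (lam • (1 : Matrix (Fin (n + 1)) (Fin (n + 1)) ℝ) + gram (Fin.cons x xs)).det =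
      (lam • (1 : Matrix (Fin n) (Fin n) ℝ) + gram xs).det *
        (lam + posteriorVariance lam x xs) := by
  have hsub : (lam • (1 : Matrix (Fin (n + 1)) (Fin (n + 1)) ℝ) + gram (Fin.cons x xs)).submatrix
      Fin.succ Fin.succ = lam • 1 + gram xs := by
    ext i j
    simp [gram, Matrix.one_apply]
  rw [Matrix.det_succ_eq_mul_schur, hsub, posteriorVariance]
  · congr 1
    simp [gram, (Fin.succ_ne_zero _).symm, real_inner_comm x]
    ring
  · rw [hsub]
    exact (posDef_smul_one_add_gram hlam xs).det_pos.ne'.isUnit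

theorem infoGain_eq_log_det (hlam : 0 < lam) (x : Fin n → H) :
    infoGain lam x =
      Real.log (lam⁻¹ ^ n * (lam • (1 : Matrix (Fin n) (Fin n) ℝ) + gram x).det) := by
  have : 1 + lam⁻¹ • gram x = lam⁻¹ • (lam • (1 : Matrix (Fin n) (Fin n) ℝ) + gram x) := by
    rw [smul_add, smul_smul, inv_mul_cancel₀ hlam.ne', one_smul]
  rw [infoGain, this, Matrix.det_smul, Fintype.card_fin]

theorem incrGain_eq_log_one_add (hlam : 0 < lam) (x : H) (xs : Fin n → H) :
    incrGain lam x xs = Real.log (1 + posteriorVariance lam x xs / lam) := by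
  have hdet := (posDef_smul_one_add_gram hlam xs).det_pos
  have hdet_cons := (posDef_smul_one_add_gram hlam (Fin.cons x xs)).det_pos
  rw [incrGain, infoGain_eq_log_det hlam, infoGain_eq_log_det hlam,
    ← Real.log_div (by positivity) (by positivity), det_smul_one_add_gram_cons hlam]
  congr 1
  rw [pow_succ, inv_pow]
  field_simp

theorem sub_dotProduct_eq_of_mulVec_eq (x : H) (xs : Fin n → H) {w : Fin n → ℝ}
    (hw : (lam • (1 : Matrix (Fin n) (Fin n) ℝ) + gram xs) *ᵥ w = fun i => ⟪x, xs i⟫) :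
    ⟪x, x⟫ - (fun i => ⟪x, xs i⟫) ⬝ᵥ w = lam * ∑ i, w i ^ 2 + ‖x - ∑ i, w i • xs i‖ ^ 2 := by
  set v := ∑ i, w i • xs i
  have hk : ∀ i, ⟪x, xs i⟫ = lam * w i + ⟪xs i, v⟫ := fun i => by
    rw [← congrFun hw i, Matrix.add_mulVec, Matrix.smul_mulVec, Matrix.one_mulVec, Pi.add_apply,
      Pi.smul_apply, gram_mulVec_apply, smul_eq_mul]
  have hxv : (fun i => ⟪x, xs i⟫) ⬝ᵥ w = ⟪x, v⟫ := by
    simp [dotProduct, v, inner_sum, real_inner_smul_right, mul_comm]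
  have hvv : ⟪v, v⟫ = ∑ i, w i * ⟪xs i, v⟫ := by
    simp_rw [v, sum_inner, real_inner_smul_left]
  have hkw : (fun i => ⟪x, xs i⟫) ⬝ᵥ w = lam * ∑ i, w i ^ 2 + ⟪v, v⟫ := by
    simp only [dotProduct, hk, hvv, add_mul, Finset.sum_add_distrib, Finset.mul_sum]
    congr 1 <;> exact Finset.sum_congr rfl fun i _ => by ring
  rw [norm_sub_sq_real, ← real_inner_self_eq_norm_sq, ← real_inner_self_eq_norm_sq]
  linarith

theorem mul_inner_sq_le_mul_posteriorVariance (hlam : 0 < lam) (θ x : H) (xs : Fin n → H) :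
    lam * ⟪θ, x⟫ ^ 2 ≤ (lam * ‖θ‖ ^ 2 + ∑ i, ⟪θ, xs i⟫ ^ 2) * posteriorVariance lam x xs := by
  set P := lam • (1 : Matrix (Fin n) (Fin n) ℝ) + gram xs
  set w := P⁻¹ *ᵥ fun i => ⟪x, xs i⟫
  have hw : P *ᵥ w = fun i => ⟪x, xs i⟫ := by
    rw [Matrix.mulVec_mulVec,
      Matrix.mul_nonsing_inv _ (posDef_smul_one_add_gram hlam xs).det_pos.ne'.isUnit,
      Matrix.one_mulVec]
  set v := ∑ i, w i • xs i
  have hsplit : ⟪θ, x⟫ = ⟪θ, x - v⟫ + ∑ i, w i * ⟪θ, xs i⟫ := by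
    simp_rw [inner_sub_right, v, inner_sum, real_inner_smul_right]
    ring
  have hresidual : lam * ⟪θ, x - v⟫ ^ 2 ≤ (lam * ‖θ‖ ^ 2) * ‖x - v‖ ^ 2 := by
    rw [mul_assoc, ← mul_pow]
    exact mul_le_mul_of_nonneg_left
      (sq_le_sq.mpr ((abs_real_inner_le_norm θ (x - v)).trans (le_abs_self _))) hlam.le
  have hspan : lam * (∑ i, w i * ⟪θ, xs i⟫) ^ 2 ≤ (∑ i, ⟪θ, xs i⟫ ^ 2) * (lam * ∑ i, w i ^ 2) := by
    calc lam * (∑ i, w i * ⟪θ, xs i⟫) ^ 2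
        ≤ lam * ((∑ i, w i ^ 2) * ∑ i, ⟪θ, xs i⟫ ^ 2) := by
          gcongr; exact Finset.sum_mul_sq_le_sq_mul_sq _ _ _
      _ = (∑ i, ⟪θ, xs i⟫ ^ 2) * (lam * ∑ i, w i ^ 2) := by ring
  rw [posteriorVariance, sub_dotProduct_eq_of_mulVec_eq x xs hw, add_comm (lam * ∑ i, w i ^ 2),
    hsplit]
  exact mul_add_sq_le_of_mul_sq_le hlam.le (by positivity) (by positivity) (by positivity)
    (by positivity) hresidual hspan

end InformationGain

theorem exists_separating_of_not_epsDependent {H : Type*} [NormedAddCommGroup H]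
    [InnerProductSpace ℝ H] {F : Set (H → ℝ)} {S ε : ℝ} (hF : F ⊆ rkhsBall S) {x : H} {n : ℕ}
    {xs : Fin n → H} (h : ¬ epsDependent F ε x xs) :
    ∃ θ : H, ‖θ‖ ≤ 2 * S ∧ ∑ i, ⟪θ, xs i⟫ ^ 2 ≤ ε ^ 2 ∧ ε < ⟪θ, x⟫ := by
  simp only [epsDependent, not_forall, not_le, exists_prop] at h
  obtain ⟨f, hf, g, hg, hsum, hx⟩ := h
  obtain ⟨θ₁, hθ₁, rfl⟩ := hF hf
  obtain ⟨θ₂, hθ₂, rfl⟩ := hF hg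
  refine ⟨θ₁ - θ₂, ?_, ?_, ?_⟩
  · linarith [norm_sub_le θ₁ θ₂]
  · simpa only [inner_sub_left] using hsum
  · simpa only [inner_sub_left] using hx

theorem incrGain_gt_of_independent_general
    {H : Type*} [NormedAddCommGroup H] [InnerProductSpace ℝ H]
    (S ε ε' : ℝ) (hS : 0 < S) (hε : 0 < ε) (hε' : ε' ≥ ε)
    (F : Set (H → ℝ)) (hF : F ⊆ rkhsBall S)
    (x : H) {n : ℕ} (xs : Fin n → H)
    (hind : ¬ epsDependent F ε' x xs) :
    incrGain ((ε / (2 * S)) ^ 2) x xs > Real.log (3 / 2) := by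
  obtain ⟨θ, hθ, hsum, hθx⟩ := exists_separating_of_not_epsDependent hF hind
  set lam := (ε / (2 * S)) ^ 2
  have hlam : 0 < lam := by positivity
  have hreg : lam * ‖θ‖ ^ 2 ≤ ε' ^ 2 :=
    calc lam * ‖θ‖ ^ 2 ≤ lam * (2 * S) ^ 2 := by gcongr
      _ = ε ^ 2 := by rw [← mul_pow, div_mul_cancel₀ _ (by positivity)]
      _ ≤ ε' ^ 2 := by gcongr
  have hε'_pos : 0 < ε' := hε.trans_le hε'
  have hsep : lam * ε' ^ 2 < lam * ⟪θ, x⟫ ^ 2 := by gcongr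
  have hvar : lam / 2 < posteriorVariance lam x xs := by
    have hbound := hsep.trans_le (mul_inner_sq_le_mul_posteriorVariance hlam θ x xs)
    have hpos : 0 < posteriorVariance lam x xs :=
      pos_of_mul_pos_right (hbound.trans' (by positivity)) (by positivity)
    nlinarith [mul_le_mul_of_nonneg_right (add_le_add hreg hsum) hpos.le]
  rw [gt_iff_lt, incrGain_eq_log_one_add hlam]
  refine Real.log_lt_log (by norm_num) ?_
  rw [← sub_lt_iff_lt_add', lt_div_iff₀ hlam]
  linarith

/-- **Lemma 1.** If `F ⊆ B(S)` and `x ∈ X` is `ε'`-independent of `x_1,…,x_n ⊆ X`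
w.r.t. `F` for some `ε' ≥ ε`, then `Δγ((ε/(2S))²; x | x_1,…,x_n) > log(3/2)`. -/
theorem incrGain_gt_of_independent
    {H : Type*} [NormedAddCommGroup H] [InnerProductSpace ℝ H]
    (X : Set H) (S ε ε' : ℝ) (hS : 0 < S) (hε : 0 < ε) (hε' : ε' ≥ ε)
    (F : Set (H → ℝ)) (hF : F ⊆ rkhsBall S)
    (x : H) (hx : x ∈ X) {n : ℕ} (xs : Fin n → H) (hxs : ∀ i, xs i ∈ X)
    (hind : ¬ epsDependent F ε' x xs) :
    incrGain ((ε / (2 * S)) ^ 2) x xs > Real.log (3 / 2) :=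
  incrGain_gt_of_independent_general S ε ε' hS hε hε' F hF x xs hind
end

section
/- Let H be a real inner product space, let x_1,…,x_T ∈ H and λ > 0. Then there exists a permutation of the T points, again denoted x_1,…,x_T, such that for every i = 1,…,T−1 the increments of information gain are monotonically non-increasing: Δγ(λ; x_i | x_1,…,x_{i−1}) ≥ Δγ(λ; x_{i+1} | x_1,…,x_i). -/
open scoped RealInnerProductSpace BigOperators

/-!
Conditioning on one more point can only decrease the increment of information gain. To see this,
map the finitely many points isometrically into a Euclidean space; Sylvester's identity
`det (1 + XY) = det (1 + YX)` turns `det (I + λ⁻¹ K)` into `det (1 + λ⁻¹ ∑ vᵢ vᵢᵀ)` for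
feature vectors `vᵢ`. For a symmetric `A` and rank-one updates `P = c u uᵀ`, `Q = c w wᵀ`,
`det (A + P + Q) det A = det (A + P) det (A + Q) - (c det A · uᵀ A⁻¹ w)²`.
Ordering the points greedily, each one maximising the increment given its predecessors, then gives
`Δγ(x_{i+1} | x_{≤i}) ≤ Δγ(x_{i+1} | x_{<i}) ≤ Δγ(x_i | x_{<i})`.
-/

open scoped Matrix

namespace Matrix

variable {ι R : Type*} [Fintype ι] [DecidableEq ι] [CommRing R]

theorem det_add_smul_vecMulVec_add_smul_vecMulVec {A : Matrix ι ι R} (hA : IsUnit A.det)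
    (c : R) (u w : ι → R) :
    (A + c • vecMulVec u u + c • vecMulVec w w).det =
      A.det * ((1 + c * (u ⬝ᵥ A⁻¹ *ᵥ u)) * (1 + c * (w ⬝ᵥ A⁻¹ *ᵥ w)) -
        c ^ 2 * (u ⬝ᵥ A⁻¹ *ᵥ w) * (w ⬝ᵥ A⁻¹ *ᵥ u)) := by
  let U : Matrix ι (Fin 2) R := of fun k j => ![u, w] j k
  have hUU : c • vecMulVec u u + c • vecMulVec w w = U * (c • Uᵀ) := by
    ext i j
    simp [U, mul_apply, Fin.sum_univ_two, vecMulVec_apply]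
    ring
  have hfactor : A + U * (c • Uᵀ) = A * (1 + A⁻¹ * U * (c • Uᵀ)) := by
    rw [mul_add, mul_one, Matrix.mul_assoc A⁻¹, mul_nonsing_inv_cancel_left _ _ hA]
  have hgram : Uᵀ * (A⁻¹ * U) = of fun j k => ![u, w] j ⬝ᵥ A⁻¹ *ᵥ ![u, w] k := rfl
  rw [add_assoc, hUU, hfactor, det_mul, det_one_add_mul_comm, smul_mul, hgram, det_fin_two]
  simp
  ring

variable [LinearOrder R] [IsStrictOrderedRing R]

theorem det_add_smul_vecMulVec_add_smul_vecMulVec_mul_det_le {A : Matrix ι ι R}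
    (hA : IsUnit A.det) (hsymm : A.IsSymm) (c : R) (u w : ι → R) :
    (A + c • vecMulVec u u + c • vecMulVec w w).det * A.det ≤
      (A + c • vecMulVec u u).det * (A + c • vecMulVec w w).det := by
  have hcomm : w ⬝ᵥ A⁻¹ *ᵥ u = u ⬝ᵥ A⁻¹ *ᵥ w := by
    rw [dotProduct_mulVec, ← mulVec_transpose, hsymm.inv.eq, dotProduct_comm]
  have h := det_add_smul_vecMulVec_add_smul_vecMulVec hA c
  have hu := h u 0
  have hw := h 0 w
  simp only [vecMulVec_zero, smul_zero, add_zero, zero_dotProduct, dotProduct_zero, mulVec_zero,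
    mul_zero] at hu hw
  rw [h, hu, hw, hcomm]
  nlinarith [mul_self_nonneg (A.det * c * (u ⬝ᵥ A⁻¹ *ᵥ w))]

end Matrix

open Matrix (vecMulVec)

section LinearIsometry

variable {E F : Type*} [NormedAddCommGroup E] [InnerProductSpace ℝ E]
  [NormedAddCommGroup F] [InnerProductSpace ℝ F]

theorem gram_comp_linearIsometry (f : E →ₗᵢ[ℝ] F) {n : ℕ} (z : Fin n → E) :
    gram (f ∘ z) = gram z := by
  ext i j
  simp [gram]

theorem infoGain_comp_linearIsometry (lam : ℝ) (f : E →ₗᵢ[ℝ] F) {n : ℕ} (z : Fin n → E) :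
    infoGain lam (f ∘ z) = infoGain lam z := by
  rw [infoGain, gram_comp_linearIsometry, infoGain]

theorem incrGain_comp_linearIsometry (lam : ℝ) (f : E →ₗᵢ[ℝ] F) (w : E) {n : ℕ}
    (z : Fin n → E) : incrGain lam (f w) (f ∘ z) = incrGain lam w z := by
  rw [incrGain, ← Fin.comp_cons, infoGain_comp_linearIsometry, infoGain_comp_linearIsometry,
    incrGain]

theorem det_one_add_smul_gram_pos {c : ℝ} (hc : 0 ≤ c) {n : ℕ} (z : Fin n → E) :
    0 < (1 + c • gram z).det :=
  (Matrix.PosDef.one.add_posSemidef ((Matrix.posSemidef_gram ℝ z).smul hc)).det_pos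

end LinearIsometry

section Euclidean

variable {ι : Type*} [Fintype ι] [DecidableEq ι]

theorem det_one_add_smul_gram_euclidean (c : ℝ) {n : ℕ} (z : Fin n → EuclideanSpace ℝ ι) :
    (1 + c • gram z).det = (1 + c • ∑ i, vecMulVec (z i).ofLp (z i).ofLp).det := by
  let Φ : Matrix ι (Fin n) ℝ := Matrix.of fun k i => z i k
  have hgram : gram z = Φᵀ * Φ := by
    ext i j
    simp [gram, Φ, Matrix.mul_apply, EuclideanSpace.inner_eq_star_dotProduct, dotProduct,
      mul_comm]
  have hsum : Φ * Φᵀ = ∑ i, vecMulVec (z i).ofLp (z i).ofLp := by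
    ext k l
    simp [Φ, Matrix.mul_apply, Matrix.sum_apply, Matrix.vecMulVec_apply]
  rw [hgram, ← Matrix.smul_mul, Matrix.det_one_add_mul_comm, Matrix.mul_smul, hsum]

theorem incrGain_snoc_le_euclidean {lam : ℝ} (hlam : 0 ≤ lam) (w a : EuclideanSpace ℝ ι)
    {n : ℕ} (z : Fin n → EuclideanSpace ℝ ι) :
    incrGain lam w (Fin.snoc z a) ≤ incrGain lam w z := by
  set c := lam⁻¹
  set D : Matrix ι ι ℝ := 1 + c • ∑ i, vecMulVec (z i).ofLp (z i).ofLp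
  have hD : (1 + c • gram z).det = D.det := det_one_add_smul_gram_euclidean c z
  have hDw : (1 + c • gram (Fin.cons w z)).det = (D + c • vecMulVec w.ofLp w.ofLp).det := by
    rw [det_one_add_smul_gram_euclidean, Fin.sum_univ_succ]
    simp only [Fin.cons_zero, Fin.cons_succ, D]
    congr 1
    module
  have hDa : (1 + c • gram (Fin.snoc z a)).det = (D + c • vecMulVec a.ofLp a.ofLp).det := by
    rw [det_one_add_smul_gram_euclidean, Fin.sum_univ_castSucc]
    simp only [Fin.snoc_castSucc, Fin.snoc_last, D]
    congr 1
    module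
  have hDwa : (1 + c • gram (Fin.cons w (Fin.snoc z a))).det =
      (D + c • vecMulVec w.ofLp w.ofLp + c • vecMulVec a.ofLp a.ofLp).det := by
    rw [det_one_add_smul_gram_euclidean, Fin.sum_univ_succ, Fin.sum_univ_castSucc]
    simp only [Fin.cons_zero, Fin.cons_succ, Fin.snoc_castSucc, Fin.snoc_last, D]
    congr 1
    module
  have hpos {m : ℕ} (u : Fin m → EuclideanSpace ℝ ι) : 0 < (1 + c • gram u).det :=
    det_one_add_smul_gram_pos (inv_nonneg.2 hlam) u
  have hsymm : D.IsSymm := Matrix.isSymm_one.add <| Matrix.IsSymm.smul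
    (Matrix.IsSymm.ext fun i j => by
      simp [Matrix.sum_apply, Matrix.vecMulVec_apply, mul_comm]) c
  have key := Matrix.det_add_smul_vecMulVec_add_smul_vecMulVec_mul_det_le
    (hD ▸ hpos z).ne'.isUnit hsymm c w.ofLp a.ofLp
  rw [← hD, ← hDw, ← hDa, ← hDwa] at key
  have hlog := Real.log_le_log (mul_pos (hpos _) (hpos _)) key
  rw [Real.log_mul (hpos _).ne' (hpos _).ne', Real.log_mul (hpos _).ne' (hpos _).ne'] at hlog
  simp only [incrGain, infoGain]
  linarith

end Euclidean

theorem incrGain_snoc_le {H : Type*} [NormedAddCommGroup H] [InnerProductSpace ℝ H]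
    {lam : ℝ} (hlam : 0 ≤ lam) (w a : H) {n : ℕ} (z : Fin n → H) :
    incrGain lam w (Fin.snoc z a) ≤ incrGain lam w z := by
  let W := Submodule.span ℝ (insert w (insert a (Set.range z)))
  have : FiniteDimensional ℝ W :=
    FiniteDimensional.span_of_finite ℝ ((Set.finite_range z).insert a |>.insert w)
  let w' : W := ⟨w, Submodule.subset_span (by simp)⟩
  let a' : W := ⟨a, Submodule.subset_span (by simp)⟩
  let z' : Fin n → W := fun j => ⟨z j, Submodule.subset_span (by simp)⟩
  let e := (stdOrthonormalBasis ℝ W).repr.toLinearIsometry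
  have transfer {m : ℕ} (v : Fin m → W) :
      incrGain lam (e w') (e ∘ v) = incrGain lam w (W.subtypeₗᵢ ∘ v) := by
    rw [incrGain_comp_linearIsometry, ← incrGain_comp_linearIsometry lam W.subtypeₗᵢ]
    rfl
  have h := incrGain_snoc_le_euclidean hlam (e w') (e a') (e ∘ z')
  rw [← Fin.comp_snoc, transfer, transfer, Fin.comp_snoc] at h
  exact h

theorem Fin.compl_range_nonempty_of_lt {n T : ℕ} (hn : n < T) (g : Fin n → Fin T) :
    (Set.range g)ᶜ.Nonempty := by
  rw [Set.nonempty_compl, Ne, Set.range_eq_univ]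
  intro hg
  have := Fintype.card_le_of_surjective g hg
  rw [Fintype.card_fin, Fintype.card_fin] at this
  omega

section Greedy

variable {H : Type*} [NormedAddCommGroup H] [InnerProductSpace ℝ H] (lam : ℝ) {T : ℕ}
  (x : Fin T → H)

theorem exists_max_incrGain {n : ℕ} (hn : n < T) (g : Fin n → Fin T) :
    ∃ b ∉ Set.range g, ∀ a ∉ Set.range g,
      incrGain lam (x a) (x ∘ g) ≤ incrGain lam (x b) (x ∘ g) :=
  Set.exists_max_image _ _ (Set.toFinite _) (Fin.compl_range_nonempty_of_lt hn g)

noncomputable def greedyNext {n : ℕ} (hn : n < T) (g : Fin n → Fin T) : Fin T :=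
  (exists_max_incrGain lam x hn g).choose

noncomputable def greedy (k : Fin T) : Fin T :=
  greedyNext lam x k.2 fun j : Fin k => greedy ⟨j, j.2.trans k.2⟩
termination_by k.val

noncomputable def greedyPrefix (k : Fin T) : Fin k → Fin T :=
  fun j => greedy lam x ⟨j, j.2.trans k.2⟩

theorem greedy_eq (k : Fin T) : greedy lam x k = greedyNext lam x k.2 (greedyPrefix lam x k) := by
  rw [greedy]
  rfl

theorem greedyPrefix_succ {i : ℕ} (h : i + 1 < T) :
    greedyPrefix lam x ⟨i + 1, h⟩ =
      Fin.snoc (greedyPrefix lam x ⟨i, Nat.lt_of_succ_lt h⟩)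
        (greedy lam x ⟨i, Nat.lt_of_succ_lt h⟩) :=
  funext <| Fin.lastCases (by simp [greedyPrefix]) fun j => by simp [greedyPrefix]

theorem greedy_spec (k : Fin T) :
    greedy lam x k ∉ Set.range (greedyPrefix lam x k) ∧
      ∀ a ∉ Set.range (greedyPrefix lam x k),
        incrGain lam (x a) (x ∘ greedyPrefix lam x k) ≤
          incrGain lam (x (greedy lam x k)) (x ∘ greedyPrefix lam x k) :=
  greedy_eq lam x k ▸ (exists_max_incrGain lam x k.2 _).choose_spec

theorem greedy_injective : Function.Injective (greedy lam x) := by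
  intro k l hkl
  by_contra hne
  rcases lt_or_gt_of_ne hne with hlt | hlt
  · exact (greedy_spec lam x l).1 ⟨⟨k, hlt⟩, hkl⟩
  · exact (greedy_spec lam x k).1 ⟨⟨l, hlt⟩, hkl.symm⟩

variable {lam} in
theorem incrGain_greedy_succ_le (hlam : 0 ≤ lam) {i : ℕ} (h : i + 1 < T) :
    incrGain lam (x (greedy lam x ⟨i + 1, h⟩)) (x ∘ greedyPrefix lam x ⟨i + 1, h⟩) ≤
      incrGain lam (x (greedy lam x ⟨i, Nat.lt_of_succ_lt h⟩))
        (x ∘ greedyPrefix lam x ⟨i, Nat.lt_of_succ_lt h⟩) := by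
  have hnew :
      greedy lam x ⟨i + 1, h⟩ ∉ Set.range (greedyPrefix lam x ⟨i, Nat.lt_of_succ_lt h⟩) :=
    fun ⟨j, hj⟩ => (greedy_spec lam x ⟨i + 1, h⟩).1 ⟨j.castSucc, hj⟩
  rw [greedyPrefix_succ, Fin.comp_snoc]
  exact (incrGain_snoc_le hlam _ _ _).trans
    ((greedy_spec lam x ⟨i, Nat.lt_of_succ_lt h⟩).2 _ hnew)

end Greedy

/-- **Lemma 3 (submodularity).** Any `T` points can be rearranged (by a permutation `σ`)
so that the increments of information gain are monotonically non-increasing: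
`Δγ(λ; x_i | x_1,…,x_{i−1}) ≥ Δγ(λ; x_{i+1} | x_1,…,x_i)` for `i = 1,…,T−1`. -/
theorem exists_perm_incrGain_antitone
    {H : Type*} [NormedAddCommGroup H] [InnerProductSpace ℝ H]
    (lam : ℝ) (hlam : 0 < lam) {T : ℕ} (x : Fin T → H) :
    ∃ σ : Equiv.Perm (Fin T), ∀ (i : ℕ) (h : i + 1 < T),
      incrGain lam (x (σ ⟨i, Nat.lt_of_succ_lt h⟩))
          (fun j : Fin i => x (σ ⟨j.1, j.2.trans (Nat.lt_of_succ_lt h)⟩)) ≥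
        incrGain lam (x (σ ⟨i + 1, h⟩))
          (fun j : Fin (i + 1) => x (σ ⟨j.1, j.2.trans h⟩)) :=
  ⟨Equiv.ofBijective _ (Finite.injective_iff_bijective.mp (greedy_injective lam x)),
    fun _ h => incrGain_greedy_succ_le x hlam.le h⟩
end

section
/- Let H be a finite-dimensional real inner product space, let x, x_1,…,x_n ∈ H and λ > 0, and let V = λI + Σ_{i=1}^n x_i x_iᵀ (a positive definite, hence invertible, self-adjoint linear map on H). Then the increment of information gain satisfies Δγ(λ; x | {x_1,…,x_n}) = log(1 + ⟪x, V⁻¹ x⟫). -/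
open scoped RealInnerProductSpace BigOperators

/-- The rank-one self-adjoint map `x xᵀ : v ↦ ⟪x, v⟫ • x`. -/
noncomputable def outer {H : Type*} [NormedAddCommGroup H] [InnerProductSpace ℝ H]
    (x : H) : H →ₗ[ℝ] H where
  toFun v := ⟪x, v⟫ • x
  map_add' := by intros; simp [inner_add_right, add_smul]
  map_smul' := by intros; simp [inner_smul_right, mul_smul]

/-!
Every determinant in sight is reduced to a smaller one by the Weinstein–Aronszajn identity
`det (1 + A B) = det (1 + B A)`. Writing `Φ v = (⟪xᵢ, v⟫)ᵢ` and `Ψ c = ∑ cᵢ xᵢ`, one has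
`∑ xᵢ xᵢᵀ = Ψ Φ` and `Φ Ψ = K`, so `det (λ I + ∑ xᵢ xᵢᵀ) = λ ^ dim H * det (I + λ⁻¹ K)`.
Adding `x` to the points replaces `V` by `V + x xᵀ = V (I + V⁻¹ x xᵀ)`, whose determinant is
`det V * (1 + ⟪x, V⁻¹ x⟫)` by the same identity with a one-dimensional middle space. Hence
`det (I + λ⁻¹ K)` gets multiplied by `1 + ⟪x, V⁻¹ x⟫`, and positivity of these Gram determinants
lets the logarithm split.
-/

theorem LinearMap.det_id_add_comp_comm {R E F : Type*} [CommRing R]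
    [AddCommGroup E] [Module R E] [Module.Free R E] [Module.Finite R E]
    [AddCommGroup F] [Module R F] [Module.Free R F] [Module.Finite R F]
    (A : F →ₗ[R] E) (B : E →ₗ[R] F) :
    LinearMap.det (LinearMap.id + A ∘ₗ B) = LinearMap.det (LinearMap.id + B ∘ₗ A) := by
  classical
  let bE := Module.Free.chooseBasis R E
  let bF := Module.Free.chooseBasis R F
  rw [← LinearMap.det_toMatrix bE, ← LinearMap.det_toMatrix bF, map_add, map_add,
    LinearMap.toMatrix_id, LinearMap.toMatrix_id, LinearMap.toMatrix_comp bE bF bE,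
    LinearMap.toMatrix_comp bF bE bF, Matrix.det_one_add_mul_comm]

section

variable {H : Type*} [NormedAddCommGroup H] [InnerProductSpace ℝ H]

theorem outer_eq_toSpanSingleton_comp_innerₛₗ (x : H) :
    outer x = LinearMap.toSpanSingleton ℝ H x ∘ₗ innerₛₗ ℝ x := by
  ext v
  simp [outer]

theorem sum_outer_eq_linearCombination_comp_pi_innerₛₗ {m : ℕ} (xs : Fin m → H) :
    ∑ i, outer (xs i) =
      Fintype.linearCombination ℝ xs ∘ₗ LinearMap.pi fun i => innerₛₗ ℝ (xs i) := by
  ext v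
  simp [outer, Fintype.linearCombination_apply]

theorem pi_innerₛₗ_comp_linearCombination {m : ℕ} (xs : Fin m → H) :
    (LinearMap.pi fun i => innerₛₗ ℝ (xs i)) ∘ₗ Fintype.linearCombination ℝ xs =
      Matrix.toLin' (gram xs) := by
  refine LinearMap.ext fun c => funext fun i => ?_
  simp [Fintype.linearCombination_apply, gram, Matrix.mulVec, dotProduct, mul_comm]

theorem det_one_add_smul_gram_pos_s5 {lam : ℝ} (hlam : 0 < lam) {m : ℕ} (xs : Fin m → H) :
    0 < (1 + lam⁻¹ • gram xs).det :=
  (Matrix.PosDef.one.add_posSemidef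
    ((Matrix.posSemidef_gram ℝ xs).smul (inv_nonneg.2 hlam.le))).det_pos

variable [FiniteDimensional ℝ H]

theorem det_smul_id_add_sum_outer {lam : ℝ} (hlam : lam ≠ 0) {m : ℕ} (xs : Fin m → H) :
    LinearMap.det (lam • LinearMap.id + ∑ i, outer (xs i)) =
      lam ^ Module.finrank ℝ H * (1 + lam⁻¹ • gram xs).det := by
  set Φ : H →ₗ[ℝ] Fin m → ℝ := LinearMap.pi fun i => innerₛₗ ℝ (xs i)
  set Ψ := Fintype.linearCombination ℝ xs
  have hfactor : lam • LinearMap.id + Ψ ∘ₗ Φ = lam • (LinearMap.id + (lam⁻¹ • Ψ) ∘ₗ Φ) := by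
    rw [smul_add, LinearMap.smul_comp, smul_smul, mul_inv_cancel₀ hlam, one_smul]
  rw [sum_outer_eq_linearCombination_comp_pi_innerₛₗ, hfactor, LinearMap.det_smul,
    LinearMap.det_id_add_comp_comm, LinearMap.comp_smul, pi_innerₛₗ_comp_linearCombination,
    ← Matrix.toLin'_one, ← map_smul, ← map_add, LinearMap.det_toLin']

theorem det_id_add_comp_outer (W : H →ₗ[ℝ] H) (x : H) :
    LinearMap.det (LinearMap.id + W ∘ₗ outer x) = 1 + ⟪x, W x⟫ := by
  have hscalar : LinearMap.id + innerₛₗ ℝ x ∘ₗ W ∘ₗ LinearMap.toSpanSingleton ℝ H x =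
      (1 + ⟪x, W x⟫) • LinearMap.id := by
    ext
    simp
  rw [outer_eq_toSpanSingleton_comp_innerₛₗ, ← LinearMap.comp_assoc,
    LinearMap.det_id_add_comp_comm, hscalar, LinearMap.det_smul, LinearMap.det_id,
    Module.finrank_self, pow_one, mul_one]

theorem det_add_outer {V W : H →ₗ[ℝ] H} (hVW : V ∘ₗ W = LinearMap.id) (x : H) :
    LinearMap.det (V + outer x) = LinearMap.det V * (1 + ⟪x, W x⟫) := by
  rw [← det_id_add_comp_outer, ← LinearMap.det_comp, LinearMap.comp_add, LinearMap.comp_id,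
    ← LinearMap.comp_assoc, hVW, LinearMap.id_comp]

theorem det_one_add_smul_gram_cons {lam : ℝ} (hlam : lam ≠ 0) (x : H) {n : ℕ}
    (xs : Fin n → H) {W : H →ₗ[ℝ] H}
    (hVW : (lam • LinearMap.id + ∑ i, outer (xs i)) ∘ₗ W = LinearMap.id) :
    (1 + lam⁻¹ • gram (Fin.cons x xs : Fin (n + 1) → H)).det =
      (1 + lam⁻¹ • gram xs).det * (1 + ⟪x, W x⟫) := by
  refine mul_left_cancel₀ (pow_ne_zero (Module.finrank ℝ H) hlam) ?_
  rw [← mul_assoc, ← det_smul_id_add_sum_outer hlam, ← det_smul_id_add_sum_outer hlam,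
    ← det_add_outer hVW, Fin.sum_univ_succ]
  simp only [Fin.cons_zero, Fin.cons_succ]
  congr 1
  abel

end

theorem incrGain_eq_log_one_add_inner_inv_general
    {H : Type*} [NormedAddCommGroup H] [InnerProductSpace ℝ H] [FiniteDimensional ℝ H]
    (lam : ℝ) (hlam : 0 < lam) (x : H) {n : ℕ} (xs : Fin n → H)
    (V W : H →ₗ[ℝ] H)
    (hV : V = lam • (LinearMap.id : H →ₗ[ℝ] H) + ∑ i, outer (xs i))
    (hVW : V ∘ₗ W = LinearMap.id) :
    incrGain lam x xs = Real.log (1 + ⟪x, W x⟫) := by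
  subst hV
  have hcons := det_one_add_smul_gram_cons hlam.ne' x xs hVW
  have hpos := det_one_add_smul_gram_pos_s5 hlam xs
  have hpos_cons := det_one_add_smul_gram_pos_s5 hlam (Fin.cons x xs : Fin (n + 1) → H)
  rw [hcons] at hpos_cons
  have hgain_pos : 0 < 1 + ⟪x, W x⟫ := pos_of_mul_pos_right hpos_cons hpos.le
  rw [incrGain, infoGain, infoGain, hcons, Real.log_mul hpos.ne' hgain_pos.ne',
    add_sub_cancel_left]

/-- **Lemma 4.** For `V = λI + ∑ᵢ xᵢ xᵢᵀ` (with inverse `W = V⁻¹`), the increment of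
information gain is `Δγ(λ; x | x_1,…,x_n) = log (1 + ⟪x, V⁻¹ x⟫)`. -/
theorem incrGain_eq_log_one_add_inner_inv
    {H : Type*} [NormedAddCommGroup H] [InnerProductSpace ℝ H] [FiniteDimensional ℝ H]
    (lam : ℝ) (hlam : 0 < lam) (x : H) {n : ℕ} (xs : Fin n → H)
    (V W : H →ₗ[ℝ] H)
    (hV : V = lam • (LinearMap.id : H →ₗ[ℝ] H) + ∑ i, outer (xs i))
    (hWV : W ∘ₗ V = LinearMap.id) (hVW : V ∘ₗ W = LinearMap.id) :
    incrGain lam x xs = Real.log (1 + ⟪x, W x⟫) :=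
  incrGain_eq_log_one_add_inner_inv_general lam hlam x xs V W hV hVW
end

section
/- Let H be a real inner product space, B > 0, λ > 0, and let x_1,…,x_k ∈ H with ‖x_i‖ ≤ B for all i. Then the information gain satisfies γ(λ; x_1,…,x_k) = log det(I_k + λ⁻¹ K_k) ≤ k · log(1 + B²/λ), where K_k is the k×k Gram matrix (K_k)_{ij} = ⟪x_i, x_j⟫. -/
open scoped RealInnerProductSpace BigOperators

/-! Since `log t ≤ t - 1`, each `log μᵢ - log C = log (μᵢ / C)` is at most `μᵢ / C - 1`, and these
bounds sum to at most `0` as soon as `∑ μᵢ ≤ n C`; applied to the eigenvalues of the positive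
definite matrix `I + λ⁻¹ K`, whose trace is `k + λ⁻¹ ∑ ‖xᵢ‖² ≤ k (1 + B² / λ)`, this bounds
`log det (I + λ⁻¹ K)` by `k log (1 + B² / λ)`. -/

theorem Real.sum_log_le_card_mul_log_of_sum_le {ι : Type*} [Fintype ι] {μ : ι → ℝ} {C : ℝ}
    (hμ : ∀ i, 0 < μ i) (hC : 0 < C) (hsum : ∑ i, μ i ≤ Fintype.card ι * C) :
    ∑ i, Real.log (μ i) ≤ Fintype.card ι * Real.log C := by
  have hterm (i : ι) : Real.log (μ i) - Real.log C ≤ μ i / C - 1 := by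
    rw [← Real.log_div (hμ i).ne' hC.ne']
    exact Real.log_le_sub_one_of_pos (div_pos (hμ i) hC)
  have hdiv : ∑ i, μ i / C ≤ Fintype.card ι := by
    rw [← Finset.sum_div, div_le_iff₀ hC]
    exact hsum
  have hsum_terms := Finset.sum_le_sum fun i (_ : i ∈ Finset.univ) => hterm i
  simp only [Finset.sum_sub_distrib, Finset.sum_const, Finset.card_univ, nsmul_eq_mul,
    mul_one] at hsum_terms
  linarith

theorem Matrix.PosDef.log_det_le_card_mul_log_of_trace_le {n : Type*} [Fintype n]
    [DecidableEq n] {A : Matrix n n ℝ} (hA : A.PosDef) {C : ℝ} (hC : 0 < C)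
    (htrace : A.trace ≤ Fintype.card n * C) :
    Real.log A.det ≤ Fintype.card n * Real.log C := by
  have hμ := hA.eigenvalues_pos
  simp only [hA.isHermitian.det_eq_prod_eigenvalues, RCLike.ofReal_real_eq_id, id_eq]
  simp only [hA.isHermitian.trace_eq_sum_eigenvalues, RCLike.ofReal_real_eq_id, id_eq] at htrace
  rw [Real.log_prod fun i _ => (hμ i).ne']
  exact Real.sum_log_le_card_mul_log_of_sum_le hμ hC htrace

theorem posSemidef_gram {H : Type*} [NormedAddCommGroup H] [InnerProductSpace ℝ H] {k : ℕ}
    (x : Fin k → H) : (gram x).PosSemidef :=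
  Matrix.posSemidef_gram ℝ x

theorem trace_gram {H : Type*} [NormedAddCommGroup H] [InnerProductSpace ℝ H] {k : ℕ}
    (x : Fin k → H) : (gram x).trace = ∑ i, ‖x i‖ ^ 2 := by
  simp [Matrix.trace, gram]

theorem infoGain_le_of_norm_le_general
    {H : Type*} [NormedAddCommGroup H] [InnerProductSpace ℝ H]
    (B lam : ℝ) (hlam : 0 < lam)
    {k : ℕ} (x : Fin k → H) (hx : ∀ i, ‖x i‖ ≤ B) :
    infoGain lam x ≤ k * Real.log (1 + B ^ 2 / lam) := by
  have hpos : (1 + lam⁻¹ • gram x).PosDef :=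
    Matrix.PosDef.one.add_posSemidef ((posSemidef_gram x).smul (inv_nonneg.2 hlam.le))
  have hnorm_sq : ∑ i, ‖x i‖ ^ 2 ≤ k * B ^ 2 := by
    simpa using Finset.sum_le_sum fun i (_ : i ∈ Finset.univ) =>
      pow_le_pow_left₀ (norm_nonneg (x i)) (hx i) 2
  have htrace : (1 + lam⁻¹ • gram x).trace ≤ Fintype.card (Fin k) * (1 + B ^ 2 / lam) := by
    rw [Matrix.trace_add, Matrix.trace_one, Matrix.trace_smul, trace_gram, Fintype.card_fin,
      smul_eq_mul, mul_add, mul_one, mul_div_assoc', inv_mul_eq_div]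
    gcongr
  simpa only [infoGain, Fintype.card_fin] using hpos.log_det_le_card_mul_log_of_trace_le (by positivity) htrace

/-- **Elliptic potential bound.** If `‖x_i‖ ≤ B` for all `i`, then
`γ(λ; x_1,…,x_k) = log det(I_k + λ⁻¹ K_k) ≤ k · log(1 + B²/λ)`. -/
theorem infoGain_le_of_norm_le
    {H : Type*} [NormedAddCommGroup H] [InnerProductSpace ℝ H]
    (B lam : ℝ) (hB : 0 < B) (hlam : 0 < lam)
    {k : ℕ} (x : Fin k → H) (hx : ∀ i, ‖x i‖ ≤ B) :
    infoGain lam x ≤ k * Real.log (1 + B ^ 2 / lam) :=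
  infoGain_le_of_norm_le_general B lam hlam x hx
end

section
/- Let H be a finite-dimensional real inner product space, S > 0 and 0 < ε ≤ ε', and set λ = (ε/(2S))² and V = λI + Σ_{i=1}^n x_i x_iᵀ for given x_1,…,x_n ∈ H. Suppose θ_1, θ_2 ∈ H satisfy ‖θ_1‖ ≤ S, ‖θ_2‖ ≤ S, Σ_{i=1}^n ⟪θ_1 − θ_2, x_i⟫² ≤ (ε')², and ⟪θ_1 − θ_2, x⟫ > ε' for some x ∈ H. Then ⟪x, V⁻¹x⟫ > 1/2. -/
open scoped RealInnerProductSpace BigOperators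

set_option maxHeartbeats 1000000 in
/-- If `‖θ₁‖, ‖θ₂‖ ≤ S`, `∑ᵢ ⟪θ₁ − θ₂, xᵢ⟫² ≤ (ε')²` and `⟪θ₁ − θ₂, x⟫ > ε'` for some
`0 < ε ≤ ε'`, then with `V = λI + ∑ᵢ xᵢ xᵢᵀ` (inverse `W = V⁻¹`), `λ = (ε/(2S))²`, one
has `‖x‖²_{V⁻¹} = ⟪x, V⁻¹ x⟫ > 1/2`. -/
theorem inner_inv_gt_half
    {H : Type*} [NormedAddCommGroup H] [InnerProductSpace ℝ H] [FiniteDimensional ℝ H]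
    (S ε ε' : ℝ) (hS : 0 < S) (hε : 0 < ε) (hεε' : ε ≤ ε')
    (lam : ℝ) (hlam : lam = (ε / (2 * S)) ^ 2)
    {n : ℕ} (xs : Fin n → H) (x : H)
    (V W : H →ₗ[ℝ] H)
    (hV : V = lam • (LinearMap.id : H →ₗ[ℝ] H) + ∑ i, outer (xs i))
    (hWV : W ∘ₗ V = LinearMap.id) (hVW : V ∘ₗ W = LinearMap.id)
    (θ₁ θ₂ : H) (h1 : ‖θ₁‖ ≤ S) (h2 : ‖θ₂‖ ≤ S)
    (hsum : ∑ i, ⟪θ₁ - θ₂, xs i⟫ ^ 2 ≤ ε' ^ 2)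
    (hx : ⟪θ₁ - θ₂, x⟫ > ε') :
    ⟪x, W x⟫ > 1 / 2 := by
  have hε' : 0 < ε' := lt_of_lt_of_le hε hεε'
  set φ := θ₁ - θ₂ with hφ
  set w := W x with hw
  have hVapp : ∀ v : H, V v = lam • v + ∑ i, ⟪xs i, v⟫ • xs i := by
    intro v; simp [hV, outer, LinearMap.sum_apply]
  have hinnerV : ∀ u v : H, ⟪u, V v⟫ = lam * ⟪u, v⟫ + ∑ i, ⟪xs i, v⟫ * ⟪u, xs i⟫ := by
    intro u v
    rw [hVapp]
    simp [inner_add_right, inner_smul_right, inner_sum]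
  have hsymm : ∀ u v : H, ⟪u, V v⟫ = ⟪v, V u⟫ := by
    intro u v
    rw [hinnerV, hinnerV, real_inner_comm u v]
    congr 1
    refine Finset.sum_congr rfl fun i _ => ?_
    rw [real_inner_comm u (xs i), real_inner_comm v (xs i)]
    ring
  have hlam0 : 0 ≤ lam := by rw [hlam]; positivity
  -- positivity of the quadratic form
  have hpos : ∀ u : H, 0 ≤ ⟪u, V u⟫ := by
    intro u
    rw [hinnerV]
    have h1 : 0 ≤ lam * ⟪u, u⟫ := by
      have := real_inner_self_nonneg (x := u); positivity
    have h2 : 0 ≤ ∑ i, ⟪xs i, u⟫ * ⟪u, xs i⟫ := by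
      refine Finset.sum_nonneg fun i _ => ?_
      rw [real_inner_comm u (xs i)]; exact mul_self_nonneg _
    linarith
  -- V w = x
  have hVw : V w = x := by
    have := congrArg (fun f : H →ₗ[ℝ] H => f x) hVW
    simpa using this
  -- Cauchy–Schwarz for the V-form
  set a : ℝ := ⟪w, V w⟫ with ha
  set b : ℝ := ⟪φ, V w⟫ with hb
  set c : ℝ := ⟪φ, V φ⟫ with hc
  have hcs : b ^ 2 ≤ a * c := by
    have hquad : ∀ t : ℝ, 0 ≤ a * (t * t) + (2 * b) * t + c := by
      intro t
      have h0 : 0 ≤ ⟪φ + t • w, V (φ + t • w)⟫ := hpos _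
      have hexp : ⟪φ + t • w, V (φ + t • w)⟫ = a * (t * t) + (2 * b) * t + c := by
        have hVwφ : ⟪w, V φ⟫ = b := (hsymm w φ).trans rfl
        have e1 : V (φ + t • w) = V φ + t • V w := by rw [map_add, map_smul]
        rw [e1, inner_add_right, inner_add_left, inner_add_left,
          real_inner_smul_right, real_inner_smul_right, real_inner_smul_left,
          real_inner_smul_left, hVwφ, ← ha, ← hb, ← hc]
        ring
      linarith [hexp ▸ h0]
    have := discrim_le_zero (a := a) (b := 2 * b) (c := c) hquad
    rw [discrim] at this
    nlinarith [this]
  -- identify b and a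
  have hbx : b = ⟪φ, x⟫ := by rw [hb, hVw]
  have hax : a = ⟪x, W x⟫ := by
    rw [ha, hVw, real_inner_comm]
  -- bound c
  have hφnorm : ‖φ‖ ≤ 2 * S := by
    calc ‖φ‖ ≤ ‖θ₁‖ + ‖θ₂‖ := norm_sub_le _ _
    _ ≤ 2 * S := by linarith
  have hcbound : c ≤ 2 * ε' ^ 2 := by
    have hceq : c = lam * ‖φ‖ ^ 2 + ∑ i, ⟪φ, xs i⟫ ^ 2 := by
      rw [hc, hinnerV, real_inner_self_eq_norm_sq]
      congr 1
      refine Finset.sum_congr rfl fun i _ => ?_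
      rw [real_inner_comm φ (xs i)]; ring
    have hl : lam * ‖φ‖ ^ 2 ≤ ε ^ 2 := by
      rw [hlam]
      have h4 : ‖φ‖ ^ 2 ≤ (2 * S) ^ 2 := by
        have := norm_nonneg φ
        nlinarith
      have hS2 : (0:ℝ) < (2 * S) ^ 2 := by positivity
      rw [div_pow]
      rw [div_mul_eq_mul_div, div_le_iff₀ hS2]
      nlinarith [sq_nonneg ε]
    have hε2 : ε ^ 2 ≤ ε' ^ 2 := by nlinarith
    rw [hceq]
    linarith
  -- conclude
  have hb2 : ε' ^ 2 < b ^ 2 := by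
    rw [hbx]
    nlinarith [hx, hε']
  have ha0 : 0 ≤ a := by rw [ha]; exact hpos w
  rw [← hax]
  nlinarith [hb2, hcs, hcbound, sq_nonneg ε', hε']
end

section
/- Let H be a finite-dimensional real inner product space, S > 0 and ε > 0, set λ = (ε/(2S))², and let V = λI + Σ_{i=1}^n x_i x_iᵀ for given x_1,…,x_n ∈ H. For any x ∈ H with x ≠ 0, the vector θ = (ε/2) · V⁻¹x / √(⟪x, V⁻¹x⟫) satisfies ‖θ‖ ≤ S. -/
open scoped RealInnerProductSpace BigOperators

/-- With `V = λI + ∑ᵢ xᵢ xᵢᵀ` (inverse `W = V⁻¹`), `λ = (ε/(2S))²`, the vector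
`θ = (ε/2) · V⁻¹x / √⟪x, V⁻¹x⟫` satisfies `‖θ‖ ≤ S` for any `x ≠ 0`. -/
theorem norm_scaled_inv_le
    {H : Type*} [NormedAddCommGroup H] [InnerProductSpace ℝ H] [FiniteDimensional ℝ H]
    (S ε : ℝ) (hS : 0 < S) (hε : 0 < ε)
    (lam : ℝ) (hlam : lam = (ε / (2 * S)) ^ 2)
    {n : ℕ} (xs : Fin n → H)
    (V W : H →ₗ[ℝ] H)
    (hV : V = lam • (LinearMap.id : H →ₗ[ℝ] H) + ∑ i, outer (xs i))
    (hWV : W ∘ₗ V = LinearMap.id) (hVW : V ∘ₗ W = LinearMap.id)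
    (x : H) (hx : x ≠ 0) :
    ‖(ε / 2 / Real.sqrt ⟪x, W x⟫) • W x‖ ≤ S := by
  set y := W x with hy
  have hVy : V y = x := by
    have := LinearMap.ext_iff.1 hVW x
    simpa using this
  have hyne : y ≠ 0 := by
    intro h
    apply hx
    rw [← hVy, h, map_zero]
  have hlampos : 0 < lam := by
    rw [hlam]; positivity
  have hkey : ⟪x, y⟫ = lam * ‖y‖ ^ 2 + ∑ i, ⟪xs i, y⟫ ^ 2 := by
    rw [← hVy, hV]
    simp only [LinearMap.add_apply, LinearMap.smul_apply, LinearMap.id_apply,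
      LinearMap.sum_apply, inner_add_left, sum_inner, inner_smul_left]
    have houter : ∀ i, (outer (xs i)) y = ⟪xs i, y⟫ • xs i := fun i => rfl
    simp only [houter, inner_smul_left, starRingEnd_apply, star_trivial]
    rw [real_inner_self_eq_norm_sq]
    ring_nf
  have hsum : (0:ℝ) ≤ ∑ i, ⟪xs i, y⟫ ^ 2 :=
    Finset.sum_nonneg fun i _ => sq_nonneg _
  have hynorm : 0 < ‖y‖ := norm_pos_iff.2 hyne
  have hge : lam * ‖y‖ ^ 2 ≤ ⟪x, y⟫ := by rw [hkey]; linarith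
  have hpos : 0 < ⟪x, y⟫ := lt_of_lt_of_le (by positivity) hge
  have hsqrt : Real.sqrt (lam * ‖y‖ ^ 2) ≤ Real.sqrt ⟪x, y⟫ :=
    Real.sqrt_le_sqrt hge
  have hsl : Real.sqrt lam = ε / (2 * S) := by
    rw [hlam, Real.sqrt_sq (by positivity)]
  have hsqrt2 : (ε / (2 * S)) * ‖y‖ ≤ Real.sqrt ⟪x, y⟫ := by
    calc (ε / (2 * S)) * ‖y‖ = Real.sqrt (lam * ‖y‖ ^ 2) := by
          rw [Real.sqrt_mul hlampos.le, hsl, Real.sqrt_sq hynorm.le]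
      _ ≤ Real.sqrt ⟪x, y⟫ := hsqrt
  have hsp : 0 < Real.sqrt ⟪x, y⟫ := Real.sqrt_pos.2 hpos
  rw [norm_smul, Real.norm_eq_abs, abs_of_pos (by positivity)]
  rw [div_mul_eq_mul_div, div_le_iff₀ hsp]
  calc ε / 2 * ‖y‖ = S * ((ε / (2 * S)) * ‖y‖) := by field_simp
    _ ≤ S * Real.sqrt ⟪x, y⟫ := by gcongr
end

section
/- Let H be a finite-dimensional real inner product space, ε > 0 and λ > 0, and let V = λI + Σ_{i=1}^n x_i x_iᵀ for given x_1,…,x_n ∈ H. For any x ∈ H with x ≠ 0, set θ = (ε/2) · V⁻¹x / √(⟪x, V⁻¹x⟫) and consider the pair θ_1 = θ, θ_2 = −θ. Then Σ_{i=1}^n ⟪θ_1 − θ_2, x_i⟫² ≤ ε² and ⟪θ_1 − θ_2, x⟫ = ε·√(⟪x, V⁻¹x⟫); in particular, if ⟪x, V⁻¹x⟫ > 1 then ⟪θ_1 − θ_2, x⟫ > ε. -/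
open scoped RealInnerProductSpace BigOperators

/-- With `V = λI + ∑ᵢ xᵢ xᵢᵀ` (inverse `W = V⁻¹`) and `x ≠ 0`, set
`θ = (ε/2) · V⁻¹x / √⟪x, V⁻¹x⟫`, `θ₁ = θ`, `θ₂ = −θ`. Then
`∑ᵢ ⟪θ₁ − θ₂, xᵢ⟫² ≤ ε²`, `⟪θ₁ − θ₂, x⟫ = ε √⟪x, V⁻¹x⟫`, and if `⟪x, V⁻¹x⟫ > 1`
then `⟪θ₁ − θ₂, x⟫ > ε`. -/
theorem witness_pair_properties
    {H : Type*} [NormedAddCommGroup H] [InnerProductSpace ℝ H] [FiniteDimensional ℝ H]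
    (ε lam : ℝ) (hε : 0 < ε) (hlam : 0 < lam)
    {n : ℕ} (xs : Fin n → H)
    (V W : H →ₗ[ℝ] H)
    (hV : V = lam • (LinearMap.id : H →ₗ[ℝ] H) + ∑ i, outer (xs i))
    (hWV : W ∘ₗ V = LinearMap.id) (hVW : V ∘ₗ W = LinearMap.id)
    (x : H) (hx : x ≠ 0)
    (θ θ₁ θ₂ : H)
    (hθ : θ = (ε / 2 / Real.sqrt ⟪x, W x⟫) • W x)
    (hθ₁ : θ₁ = θ) (hθ₂ : θ₂ = -θ) :
    (∑ i, ⟪θ₁ - θ₂, xs i⟫ ^ 2 ≤ ε ^ 2) ∧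
      ⟪θ₁ - θ₂, x⟫ = ε * Real.sqrt ⟪x, W x⟫ ∧
      (⟪x, W x⟫ > 1 → ⟪θ₁ - θ₂, x⟫ > ε) := by
  subst hθ₁ hθ₂ hθ hV
  set y := W x with hy
  have hVy : lam • y + ∑ i, ⟪xs i, y⟫ • xs i = x := by
    have := LinearMap.congr_fun hVW x
    simpa [outer, LinearMap.sum_apply, LinearMap.add_apply] using this
  have hyne : y ≠ 0 := by
    intro h
    apply hx
    rw [← hVy, h]
    simp
  have hyy : 0 < ⟪y, y⟫ := by
    rw [real_inner_self_eq_norm_sq]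
    exact pow_pos (norm_pos_iff.mpr hyne) 2
  have hs_eq : ⟪x, y⟫ = lam * ⟪y, y⟫ + ∑ i, ⟪xs i, y⟫ ^ 2 := by
    rw [← hVy]
    simp [inner_add_left, real_inner_smul_left, sum_inner, sq]
  have hsum_nonneg : (0:ℝ) ≤ ∑ i, ⟪xs i, y⟫ ^ 2 :=
    Finset.sum_nonneg fun i _ => sq_nonneg _
  have hs_pos : 0 < ⟪x, y⟫ := by
    rw [hs_eq]
    have : 0 < lam * ⟪y, y⟫ := mul_pos hlam hyy
    linarith
  set r := Real.sqrt ⟪x, y⟫ with hr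
  have hr_pos : 0 < r := Real.sqrt_pos.mpr hs_pos
  have hr_sq : r * r = ⟪x, y⟫ := Real.mul_self_sqrt hs_pos.le
  have hdiff : (ε / 2 / r) • y - -((ε / 2 / r) • y) = (ε / r) • y := by
    rw [sub_neg_eq_add, ← two_smul ℝ, smul_smul]
    ring_nf
  rw [hdiff]
  refine ⟨?_, ?_, ?_⟩
  · have : ∑ i, ⟪(ε / r) • y, xs i⟫ ^ 2 = (ε / r) ^ 2 * ∑ i, ⟪xs i, y⟫ ^ 2 := by
      rw [Finset.mul_sum]
      congr 1; ext i
      rw [real_inner_smul_left, real_inner_comm, mul_pow]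
    rw [this]
    have hle : ∑ i, ⟪xs i, y⟫ ^ 2 ≤ ⟪x, y⟫ := by
      rw [hs_eq]
      have : 0 < lam * ⟪y, y⟫ := mul_pos hlam hyy
      linarith
    calc (ε / r) ^ 2 * ∑ i, ⟪xs i, y⟫ ^ 2 ≤ (ε / r) ^ 2 * ⟪x, y⟫ := by
          apply mul_le_mul_of_nonneg_left hle (sq_nonneg _)
      _ = ε ^ 2 := by
          rw [← hr_sq]
          field_simp
  · rw [real_inner_smul_left, real_inner_comm, ← hr_sq]
    field_simp
  · intro h1
    rw [real_inner_smul_left, real_inner_comm]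
    have hr1 : 1 < r := by
      rw [hr]
      have := Real.lt_sqrt (x := 1) (y := ⟪x, y⟫) zero_le_one
      rw [one_pow] at this
      exact this.mpr h1
    have : ε * 1 < ε * r := by nlinarith
    calc ε = ε * 1 := (mul_one ε).symm
      _ < ε * r := this
      _ = ε / r * ⟪x, y⟫ := by rw [← hr_sq]; field_simp
end
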